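/- Let α be the all-ones composition with r ≥ 1 parts, let k ≥ r, and let D_k ∈ ℤ[t] be defined by D_r = 1 and D_j = 2·D_{j−1} − ∏_{i=r}^{j−1} (1 − it) for j > r. Then a_{n,k}^α / k^n converges to D_k(1/k) / ((k−r)! · k^r) as n → ∞, where D_k(1/k) ∈ ℚ is the evaluation of D_k at 1/k and a_{n,k}^α is the number of saturated chains in 𝔑 starting at α and ending at a composition of n with k parts. -/

import Mathlib

/-!
Write `a(m, k)` for the number of chains of `m` steps from `1ʳ` ending at width `k`, so that
`a_{r+m,k} = a(m, k)`. Removing the last step of a chain gives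
`a(m+1, k+1) = (k+1)·a(m, k+1) + 2·a(m, k) - [r + m = k]`: the endpoint arises from a
composition of width `k+1` by raising one of its parts, or from one of width `k` by adding a
part `1` at either end. The two ends agree only on an all-ones composition, and the only chain
ending at `1ᵏ` runs through all-ones compositions, so it exists iff `r + m = k`.

At `x = 1/k` the recurrence makes `a(m, k)·xᵐ` a telescoping sum with increments
`(2·a(m, k-1) - [r + m = k-1])·x^{m+1}`, so `a(m, k)·xᵐ` tends to
`H_k(x) = [k = r] + 2x·G_{k-1}(x) - [r < k]·x^{k-r}`, where `G_j(x) = ∑ₘ a(m, j)·xᵐ`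
converges for `jx < 1` (by induction on `j`, since `a(m, j)/jᵐ` converges). Summing the
recurrence gives `(1 - jx)·G_j = H_j` for `jx < 1`, hence
`G_j(x)·∏_{i=r}^{j} (1 - ix) = x^{j-r}·D_j(x)` by induction on `j`, and finally
`H_k(1/k) = D_k(1/k)/(k-r)!` because `∏_{i=r}^{k-1} (1 - i/k) = (k-r)!/k^{k-r}`.
-/

/-- A composition: a finite list of positive integers. -/
def IsComposition (P : List ℕ) : Prop := ∀ x ∈ P, 0 < x

/-- Covering relation of the poset 𝔑: prepend a part 1, append a part 1,
or increase one part by 1. -/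
def coverN (P Q : List ℕ) : Prop :=
  Q = 1 :: P ∨ Q = P ++ [1] ∨ ∃ j, j < P.length ∧ Q = P.set j (P.getD j 0 + 1)

/-- `ank cover α n k` is the number of saturated chains (with respect to `cover`)
starting at `α` and ending at a composition of `n` with `k` parts. -/
noncomputable def ank (cover : List ℕ → List ℕ → Prop) (α : List ℕ) (n k : ℕ) : ℕ :=
  Nat.card {c : List (List ℕ) //
    c.Chain' cover ∧ c.head? = some α ∧
      ∃ Q, c.getLast? = some Q ∧ Q.sum = n ∧ Q.length = k}

/-- The generating function `L_k^α(t) = Σ_n a_{n,k}^α t^n`. -/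
noncomputable def Lser (cover : List ℕ → List ℕ → Prop) (α : List ℕ) (k : ℕ) :
    PowerSeries ℤ :=
  PowerSeries.mk fun n => (ank cover α n k : ℤ)

open Finset Filter Topology

theorem cons_eq_append_singleton_iff {β : Type*} {a : β} {P : List β} :
    a :: P = P ++ [a] ↔ P = List.replicate P.length a := by
  rw [List.eq_replicate_iff]
  induction P with
  | nil => simp
  | cons b l ih =>
    rw [List.cons_append, List.cons_eq_cons]
    constructor
    · rintro ⟨rfl, h⟩
      simpa using ih.1 h
    · intro h
      simp_all

theorem tendsto_of_hasSum_sub {G : Type*} [AddCommGroup G] [TopologicalSpace G]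
    [IsTopologicalAddGroup G] {u : ℕ → G} {s : G} (h : HasSum (fun m => u (m + 1) - u m) s) :
    Tendsto u atTop (𝓝 (u 0 + s)) :=
  (h.tendsto_sum_nat.const_add (u 0)).congr fun n => by rw [sum_range_sub]; abel

section

variable {β : Type*}

def StepChain (R : β → β → Prop) (a : β) (m : ℕ) : Type _ :=
  {c : List β // c.IsChain R ∧ c.head? = some a ∧ c.length = m + 1}

namespace StepChain

variable {R : β → β → Prop} {a : β} {m : ℕ}

lemma ne_nil (c : StepChain R a m) : c.1 ≠ [] :=
  List.ne_nil_of_length_eq_add_one c.2.2.2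

def last (c : StepChain R a m) : β := c.1.getLast c.ne_nil

lemma getLast?_eq (c : StepChain R a m) : c.1.getLast? = some c.last :=
  List.getLast?_eq_some_getLast c.ne_nil

def snoc (c : StepChain R a m) (y : β) (h : R c.last y) : StepChain R a (m + 1) :=
  ⟨c.1 ++ [y], c.2.1.append (.singleton y) (by simp [c.getLast?_eq, h]),
    by rw [List.head?_append_of_ne_nil _ c.ne_nil, c.2.2.1], by simp [c.2.2.2]⟩

@[simp] lemma last_snoc (c : StepChain R a m) (y : β) (h : R c.last y) :
    (c.snoc y h).last = y :=
  List.getLast_concat ..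

lemma snoc_injective {c c' : StepChain R a m} {y y' : β} {h : R c.last y}
    {h' : R c'.last y'} (he : c.snoc y h = c'.snoc y' h') : c = c' ∧ y = y' := by
  obtain ⟨hc, hy⟩ := List.append_inj (congrArg Subtype.val he) (by rw [c.2.2.2, c'.2.2.2])
  exact ⟨Subtype.ext hc, by simpa using hy⟩

lemma exists_eq_snoc (c : StepChain R a (m + 1)) : ∃ c' y h, c = snoc c' y h := by
  have hne : c.1.dropLast ≠ [] := by
    rw [← List.length_pos_iff, List.length_dropLast, c.2.2.2]
    omega
  refine ⟨⟨c.1.dropLast, c.2.1.dropLast, ?_, by simp [c.2.2.2]⟩, c.last,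
    c.2.1.rel_getLast_dropLast hne, Subtype.ext (List.dropLast_append_getLast c.ne_nil).symm⟩
  rw [List.head?_dropLast, if_pos (by rw [c.2.2.2]; omega), c.2.2.1]

instance : Unique (StepChain R a 0) where
  default := ⟨[a], .singleton a, rfl, rfl⟩
  uniq c := by
    obtain ⟨l, -, hl, hlen⟩ := c
    obtain ⟨b, rfl⟩ := List.length_eq_one_iff.1 hlen
    obtain rfl : b = a := by simpa using hl
    rfl

lemma last_of_zero (c : StepChain R a 0) : c.last = a := by
  rw [Unique.eq_default c]
  rfl

theorem induction_last (p : ℕ → β → Prop) (h0 : p 0 a)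
    (hstep : ∀ m x y, R x y → p m x → p (m + 1) y) : ∀ {m} (c : StepChain R a m), p m c.last
  | 0, c => by rwa [last_of_zero]
  | m + 1, c => by
    obtain ⟨c', y, h, rfl⟩ := exists_eq_snoc c
    rw [last_snoc]
    exact hstep m _ y h (induction_last p h0 hstep c')

noncomputable def snocEquiv (p : β → Prop) :
    (Σ c : StepChain R a m, {y // R c.last y ∧ p y}) ≃ {c : StepChain R a (m + 1) // p c.last} :=
  Equiv.ofBijective (fun s => ⟨s.1.snoc s.2.1 s.2.2.1, by simpa using s.2.2.2⟩) <| by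
    refine ⟨fun s t he => ?_, fun c => ?_⟩
    · obtain ⟨hc, hy⟩ :=
        snoc_injective (h := s.2.2.1) (h' := t.2.2.1) (congrArg Subtype.val he)
      exact Sigma.subtype_ext hc hy
    · obtain ⟨c, hc⟩ := c
      obtain ⟨c', y, h, rfl⟩ := exists_eq_snoc c
      exact ⟨⟨c', y, h, by simpa using hc⟩, rfl⟩

variable [∀ x, Finite {y // R x y}]

theorem finite : ∀ m, Finite (StepChain R a m)
  | 0 => inferInstance
  | m + 1 => by
    have := finite m
    refine Finite.of_surjective (fun s : Σ c : StepChain R a m, {y // R c.last y} =>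
      s.1.snoc s.2.1 s.2.2) fun c => ?_
    obtain ⟨c', y, h, rfl⟩ := exists_eq_snoc c
    exact ⟨⟨c', y, h⟩, rfl⟩

theorem card_last_succ [Fintype (StepChain R a m)] (p : β → Prop) :
    Nat.card {c : StepChain R a (m + 1) // p c.last} =
      ∑ c : StepChain R a m, Nat.card {y // R c.last y ∧ p y} := by
  have (x : β) : Finite {y // R x y ∧ p y} :=
    Finite.of_injective (fun y => (⟨y.1, y.2.1⟩ : {y // R x y})) fun y z h =>
      Subtype.ext (by simpa using congrArg Subtype.val h)
  exact (Nat.card_congr (snocEquiv p)).symm.trans Nat.card_sigma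

end StepChain

end

def coverFinset (P : List ℕ) : Finset (List ℕ) :=
  insert (1 :: P) (insert (P ++ [1]) ((range P.length).image fun j => P.set j (P.getD j 0 + 1)))

lemma mem_coverFinset {P Q : List ℕ} : Q ∈ coverFinset P ↔ coverN P Q := by
  simp [coverFinset, coverN, eq_comm]

instance (P : List ℕ) : Finite {Q // coverN P Q} :=
  ((coverFinset P).finite_toSet.subset fun _ h => mem_coverFinset.2 h).to_subtype

lemma card_coverN_and (P : List ℕ) (p : List ℕ → Prop) [DecidablePred p] :
    Nat.card {Q // coverN P Q ∧ p Q} = #{Q ∈ coverFinset P | p Q} := by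
  rw [← Nat.card_eq_finsetCard]
  exact Nat.card_congr (Equiv.subtypeEquivRight fun Q => by simp [mem_coverFinset])

lemma injOn_set_getD_succ (P : List ℕ) :
    Set.InjOn (fun j => P.set j (P.getD j 0 + 1)) (range P.length) := by
  intro i hi j hj h
  have := congrArg (fun Q : List ℕ => Q.getD i 0) h
  simp only [coe_range, Set.mem_Iio] at hi hj
  by_contra hne
  simp [List.getD_eq_getElem?_getD, hi, Ne.symm hne] at this

theorem card_filter_coverFinset (P : List ℕ) (k : ℕ) :
    #{Q ∈ coverFinset P | Q.length = k + 1} + (if P = List.replicate k 1 then 1 else 0) =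
      (if P.length = k + 1 then k + 1 else 0) + (if P.length = k then 2 else 0) := by
  rw [coverFinset, filter_insert, filter_insert]
  by_cases hk : P.length = k
  · subst hk
    rw [filter_false_of_mem (by simp)]
    by_cases hP : 1 :: P = P ++ [1]
    · rw [← hP]
      simp [← cons_eq_append_singleton_iff.1 hP]
    · rw [cons_eq_append_singleton_iff] at hP
      simp [hP, card_pair (cons_eq_append_singleton_iff.not.2 hP)]
  have hP : P ≠ List.replicate k 1 := fun hP => hk (by simp [hP])
  by_cases hk1 : P.length = k + 1
  · have hcard := card_image_of_injOn (injOn_set_getD_succ P)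
    rw [filter_true_of_mem (by simp [hk1])]
    simp_all
  · rw [filter_false_of_mem (by simp [hk1])]
    simp [hk, hk1, hP]

lemma sum_of_coverN {P Q : List ℕ} (h : coverN P Q) : Q.sum = P.sum + 1 := by
  rcases h with rfl | rfl | ⟨j, hj, rfl⟩
  · simp [add_comm]
  · simp
  · rw [List.sum_set, if_pos hj, List.getD_eq_getElem _ _ hj]
    conv_rhs => rw [← List.take_append_drop j P, List.sum_append, List.drop_eq_getElem_cons hj,
      List.sum_cons]
    ring

lemma length_le_of_coverN {P Q : List ℕ} (h : coverN P Q) : P.length ≤ Q.length := by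
  rcases h with rfl | rfl | ⟨j, -, rfl⟩ <;> simp

lemma IsComposition.of_coverN {P Q : List ℕ} (hP : IsComposition P) (h : coverN P Q) :
    IsComposition Q := by
  rcases h with rfl | rfl | ⟨j, -, rfl⟩
  · simpa [IsComposition] using hP
  · simpa [IsComposition, or_imp, forall_and] using hP
  · intro x hx
    rcases List.mem_or_eq_of_mem_set hx with hx | rfl
    · exact hP x hx
    · omega

lemma IsComposition.eq_replicate_iff {P : List ℕ} (hP : IsComposition P) {k : ℕ} :
    P = List.replicate k 1 ↔ P.length = k ∧ P.sum = k := by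
  refine ⟨by rintro rfl; simp, fun ⟨hl, hs⟩ => List.eq_replicate_iff.2 ⟨hl, fun x hx => ?_⟩⟩
  by_contra hx1
  have := List.sum_lt_sum (fun _ => 1) id hP ⟨x, hx, by have := hP x hx; simp only [id]; omega⟩
  simp only [List.map_const', List.sum_replicate, smul_eq_mul, mul_one, List.map_id] at this
  omega

lemma isComposition_replicate (r : ℕ) : IsComposition (List.replicate r 1) := by
  simp [IsComposition]

noncomputable def chainCount (α : List ℕ) (m k : ℕ) : ℕ :=
  Nat.card {c : StepChain coverN α m // c.last.length = k}

section

variable {α : List ℕ} {m k : ℕ}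

lemma StepChain.sum_last (c : StepChain coverN α m) : c.last.sum = α.sum + m :=
  c.induction_last (fun m Q => Q.sum = α.sum + m) rfl fun _ _ _ h hP => by
    rw [sum_of_coverN h, hP, add_assoc]

lemma StepChain.length_le_length_last (c : StepChain coverN α m) :
    α.length ≤ c.last.length :=
  c.induction_last (fun _ Q => α.length ≤ Q.length) le_rfl fun _ _ _ h hP =>
    hP.trans (length_le_of_coverN h)

lemma StepChain.isComposition_last (hα : IsComposition α) (c : StepChain coverN α m) :
    IsComposition c.last :=
  c.induction_last (fun _ Q => IsComposition Q) hα fun _ _ _ h hP => hP.of_coverN h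

lemma StepChain.last_eq_of_getLast? {c : StepChain coverN α m} {Q : List ℕ}
    (hQ : c.1.getLast? = some Q) : c.last = Q := by
  simpa [c.getLast?_eq] using hQ

lemma getLast_sum_add_one_of_isChain {c : List (List ℕ)} (hc : c.IsChain coverN)
    (hh : c.head? = some α) {Q : List ℕ} (hQ : c.getLast? = some Q) :
    Q.sum + 1 = α.sum + c.length := by
  have hlen : c.length = c.length - 1 + 1 := by
    have : c ≠ [] := by rintro rfl; simp at hh
    have := List.length_pos_iff.2 this
    omega
  have hs := StepChain.sum_last (⟨c, hc, hh, hlen⟩ : StepChain coverN α _)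
  rw [StepChain.last_eq_of_getLast? (c := ⟨c, hc, hh, hlen⟩) hQ] at hs
  omega

theorem ank_sum_add (α : List ℕ) (m k : ℕ) :
    ank coverN α (α.sum + m) k = chainCount α m k := by
  refine Nat.card_congr
    { toFun := fun c => ⟨⟨c.1, c.2.1, c.2.2.1, ?_⟩, ?_⟩
      invFun := fun c =>
        ⟨c.1.1, c.1.2.1, c.1.2.2.1, c.1.last, c.1.getLast?_eq, c.1.sum_last, c.2⟩
      left_inv := fun _ => rfl
      right_inv := fun _ => rfl }
  · obtain ⟨Q, hQ, hs, -⟩ := c.2.2.2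
    have := getLast_sum_add_one_of_isChain c.2.1 c.2.2.1 hQ
    omega
  · obtain ⟨Q, hQ, -, hk⟩ := c.2.2.2
    exact (congrArg List.length (StepChain.last_eq_of_getLast? hQ)).trans hk

theorem chainCount_zero (α : List ℕ) (k : ℕ) :
    chainCount α 0 k = if α.length = k then 1 else 0 := by
  simp only [chainCount, StepChain.last_of_zero]
  split_ifs with h <;> simp [h]

theorem chainCount_eq_zero_of_lt_length (h : k < α.length) : chainCount α m k = 0 :=
  Nat.card_eq_zero.2 <| .inl ⟨fun c => (c.1.length_le_length_last.trans_eq c.2).not_gt h⟩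

theorem chainCount_eq_zero_of_sum_lt (hα : IsComposition α) (h : α.sum + m < k) :
    chainCount α m k = 0 :=
  Nat.card_eq_zero.2 <| .inl ⟨fun c => by
    have := List.length_le_sum_of_one_le _ (c.1.isComposition_last hα)
    rw [c.2, c.1.sum_last] at this
    omega⟩

lemma chainCount_eq_sum [Fintype (StepChain coverN α m)] (k : ℕ) :
    chainCount α m k = ∑ c : StepChain coverN α m, if c.last.length = k then 1 else 0 := by
  classical
  rw [chainCount, Nat.card_eq_fintype_card, Fintype.card_subtype, sum_boole]
  rfl

theorem chainCount_succ_succ (hα : IsComposition α) (m k : ℕ) :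
    chainCount α (m + 1) (k + 1) + (if α.sum + m = k then chainCount α m k else 0) =
      (k + 1) * chainCount α m (k + 1) + 2 * chainCount α m k := by
  classical
  have := StepChain.finite (R := coverN) (a := α) m
  let _ := Fintype.ofFinite (StepChain coverN α m)
  have hrep : (if α.sum + m = k then chainCount α m k else 0) =
      ∑ c : StepChain coverN α m, if c.last = List.replicate k 1 then 1 else 0 := by
    rw [chainCount_eq_sum]
    split_ifs with h
    · simp_rw [(StepChain.isComposition_last hα _).eq_replicate_iff, StepChain.sum_last, h,
        and_true]
    · refine (sum_eq_zero fun c _ => if_neg fun hc => h ?_).symm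
      rw [(c.isComposition_last hα).eq_replicate_iff, c.sum_last] at hc
      exact hc.2
  rw [chainCount, StepChain.card_last_succ (fun Q : List ℕ => Q.length = k + 1), hrep,
    chainCount_eq_sum, chainCount_eq_sum, mul_sum, mul_sum, ← sum_add_distrib,
    ← sum_add_distrib]
  refine sum_congr rfl fun c _ => ?_
  rw [card_coverN_and, card_filter_coverFinset]
  split_ifs <;> simp

theorem chainCount_sum_add_self (hα : IsComposition α) (m : ℕ) :
    chainCount α m (α.sum + m) = chainCount α 0 α.sum := by
  induction m with
  | zero => rfl
  | succ m ih =>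
    have := chainCount_succ_succ hα m (α.sum + m)
    have h0 : chainCount α m (α.sum + m + 1) = 0 := chainCount_eq_zero_of_sum_lt hα (by omega)
    rw [if_pos rfl, h0, ih] at this
    rw [← add_assoc]
    omega

end

section

variable {r : ℕ}

theorem chainCount_replicate_succ_succ (m k : ℕ) :
    (chainCount (.replicate r 1) (m + 1) (k + 1) : ℝ) =
      (k + 1) * chainCount (.replicate r 1) m (k + 1) + 2 * chainCount (.replicate r 1) m k -
        if r + m = k then 1 else 0 := by
  have h := chainCount_succ_succ (isComposition_replicate r) m k
  have hdiag := chainCount_sum_add_self (isComposition_replicate r) m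
  simp only [List.sum_replicate, smul_eq_mul, mul_one, chainCount_zero, List.length_replicate,
    if_true] at h hdiag
  split_ifs at h ⊢ with hk
  · subst hk
    rw [hdiag] at h ⊢
    rify at h
    push_cast
    linarith
  · rify at h
    linarith

lemma chainCount_replicate_of_lt {m k : ℕ} (h : k < r) : chainCount (.replicate r 1) m k = 0 :=
  chainCount_eq_zero_of_lt_length (by simpa using h)

/-- `∑ₘ a_{r+m,j}·xᵐ`, i.e. `x⁻ʳ·L_j(x)` for the generating function `L_j = Lser coverN 1ʳ j`. -/
noncomputable def chainGF (r j : ℕ) (x : ℝ) : ℝ :=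
  ∑' m, (chainCount (.replicate r 1) m j : ℝ) * x ^ m

/-- The value of `(1 - (j+1)x)·chainGF r (j+1) x` computed from the recurrence; unlike the
product, it still makes sense at `x = 1/(j+1)`, where it is the limit of `a_{r+m,j+1}·xᵐ`. -/
noncomputable def chainGFNumerator (r j : ℕ) (x : ℝ) : ℝ :=
  (if r = j + 1 then 1 else 0) + 2 * x * chainGF r j x - if r ≤ j then x ^ (j + 1 - r) else 0

lemma chainGF_of_lt {j : ℕ} (h : j < r) (x : ℝ) : chainGF r j x = 0 := by
  simp [chainGF, chainCount_replicate_of_lt h]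

lemma chainGFNumerator_of_succ_eq {j : ℕ} (h : j + 1 = r) (x : ℝ) :
    chainGFNumerator r j x = 1 := by
  rw [chainGFNumerator, if_pos h.symm, if_neg (by omega), chainGF_of_lt (by omega)]
  ring

lemma chainGFNumerator_of_le {j : ℕ} (h : r ≤ j) (x : ℝ) :
    chainGFNumerator r j x = 2 * x * chainGF r j x - x ^ (j + 1 - r) := by
  simp [chainGFNumerator, h, show r ≠ j + 1 by omega]

lemma hasSum_chainCount_increment {j : ℕ} {x : ℝ}
    (hs : Summable fun m => (chainCount (.replicate r 1) m j : ℝ) * x ^ m) :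
    HasSum (fun m => (2 * (chainCount (.replicate r 1) m j : ℝ) -
        if r + m = j then 1 else 0) * x ^ (m + 1))
      (2 * x * chainGF r j x - if r ≤ j then x ^ (j + 1 - r) else 0) := by
  have hind : HasSum (fun m => (if r + m = j then (1 : ℝ) else 0) * x ^ (m + 1))
      (if r ≤ j then x ^ (j + 1 - r) else 0) := by
    split_ifs with hrj
    · convert hasSum_ite_eq (j - r) (x ^ (j + 1 - r)) using 2 with m
      by_cases hm : m = j - r
      · rw [if_pos (by omega), if_pos hm, one_mul, hm]
        congr 1
        omega
      · rw [if_neg (by omega), if_neg hm, zero_mul]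
    · convert hasSum_zero with m
      rw [if_neg (by omega), zero_mul]
  exact ((hs.hasSum.mul_left (2 * x)).sub hind).congr_fun fun m => by ring

theorem tendsto_chainCount_mul_pow {j : ℕ} {x : ℝ} (hx : (j + 1) * x = 1)
    (hs : Summable fun m => (chainCount (.replicate r 1) m j : ℝ) * x ^ m) :
    Tendsto (fun m => (chainCount (.replicate r 1) m (j + 1) : ℝ) * x ^ m) atTop
      (𝓝 (chainGFNumerator r j x)) := by
  have h := tendsto_of_hasSum_sub
    (u := fun m => (chainCount (.replicate r 1) m (j + 1) : ℝ) * x ^ m) <|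
    (hasSum_chainCount_increment hs).congr_fun fun m => by
      rw [chainCount_replicate_succ_succ]
      linear_combination (chainCount (.replicate r 1) m (j + 1) : ℝ) * x ^ m * hx
  convert h using 2
  simp [chainGFNumerator, chainCount_zero, add_sub_assoc]

theorem summable_chainCount (hr : 1 ≤ r) (j : ℕ) {x : ℝ} (hx0 : 0 ≤ x) (hx : j * x < 1) :
    Summable fun m => (chainCount (.replicate r 1) m j : ℝ) * x ^ m := by
  induction j generalizing x with
  | zero => simp [chainCount_replicate_of_lt (by omega : 0 < r)]
  | succ j ih =>
    set y : ℝ := ((j : ℝ) + 1)⁻¹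
    have hy : ((j : ℝ) + 1) * y = 1 := mul_inv_cancel₀ (by positivity)
    have hjy : (j : ℝ) * y < 1 := by rw [← hy]; gcongr; linarith
    obtain ⟨M, hM⟩ := (tendsto_chainCount_mul_pow hy (ih (by positivity) hjy)).bddAbove_range
    push_cast at hx
    refine .of_nonneg_of_le (fun m => by positivity) (fun m => ?_)
      ((summable_geometric_of_lt_one (by positivity) hx).mul_left M)
    calc (chainCount (.replicate r 1) m (j + 1) : ℝ) * x ^ m
        = (chainCount (.replicate r 1) m (j + 1) : ℝ) * y ^ m * (((j : ℝ) + 1) * x) ^ m := by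
          rw [mul_pow, ← mul_assoc, mul_assoc _ (y ^ m), ← mul_pow, mul_comm y, hy, one_pow,
            mul_one]
      _ ≤ M * (((j : ℝ) + 1) * x) ^ m := by
          gcongr
          exact hM ⟨m, rfl⟩

theorem one_sub_mul_chainGF (hr : 1 ≤ r) {j : ℕ} {x : ℝ} (hx0 : 0 ≤ x)
    (hx : (j + 1) * x < 1) :
    (1 - (j + 1) * x) * chainGF r (j + 1) x = chainGFNumerator r j x := by
  have hs := summable_chainCount hr (j + 1) hx0 (by exact_mod_cast hx)
  have hsj := summable_chainCount hr j hx0 (by nlinarith)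
  have h1 := (hasSum_nat_add_iff' 1).2 hs.hasSum
  have h2 : HasSum (fun m => (chainCount (.replicate r 1) (m + 1) (j + 1) : ℝ) * x ^ (m + 1))
      ((j + 1) * x * chainGF r (j + 1) x +
        (2 * x * chainGF r j x - if r ≤ j then x ^ (j + 1 - r) else 0)) :=
    ((hs.hasSum.mul_left ((j + 1) * x)).add (hasSum_chainCount_increment hsj)).congr_fun
      fun m => by
        rw [chainCount_replicate_succ_succ]
        ring
  have := h1.unique h2
  simp only [range_one, sum_singleton, chainCount_zero, List.length_replicate, pow_zero,
    mul_one, Nat.cast_ite, Nat.cast_one, Nat.cast_zero] at this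
  rw [chainGFNumerator]
  unfold chainGF at *
  linear_combination this

variable {D : ℕ → Polynomial ℤ}

lemma aeval_succ_of_rec
    (hDk : ∀ j, r < j → D j = 2 * D (j - 1) -
      ∏ i ∈ Finset.Ico r j, (1 - (i : Polynomial ℤ) * Polynomial.X))
    {j : ℕ} (hj : r ≤ j) (x : ℝ) :
    Polynomial.aeval x (D (j + 1)) =
      2 * Polynomial.aeval x (D j) - ∏ i ∈ Ico r (j + 1), (1 - (i : ℝ) * x) := by
  simp [hDk (j + 1) (by omega), map_prod, map_ofNat]

theorem chainGF_mul_prod (hr : 1 ≤ r) (hDr : D r = 1)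
    (hDk : ∀ j, r < j → D j = 2 * D (j - 1) -
      ∏ i ∈ Finset.Ico r j, (1 - (i : Polynomial ℤ) * Polynomial.X))
    {j : ℕ} (hj : r ≤ j) {x : ℝ} (hx0 : 0 ≤ x) (hx : j * x < 1) :
    chainGF r j x * ∏ i ∈ Ico r (j + 1), (1 - (i : ℝ) * x) =
      x ^ (j - r) * Polynomial.aeval x (D j) := by
  induction j, hj using Nat.le_induction with
  | base =>
    obtain ⟨s, rfl⟩ : ∃ s, r = s + 1 := ⟨r - 1, by omega⟩
    have hFE := one_sub_mul_chainGF hr (j := s) hx0 (by exact_mod_cast hx)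
    rw [chainGFNumerator_of_succ_eq rfl] at hFE
    simp only [Nat.Ico_succ_singleton, prod_singleton, Nat.cast_add, Nat.cast_one,
      Nat.sub_self, pow_zero, hDr, map_one, mul_one]
    linear_combination hFE
  | succ j hj ih =>
    have hFE := one_sub_mul_chainGF hr (j := j) hx0 (by exact_mod_cast hx)
    rw [chainGFNumerator_of_le hj] at hFE
    have hjx : (j : ℝ) * x < 1 := by push_cast at hx; nlinarith
    have hpow : x ^ (j + 1 - r) = x ^ (j - r) * x := by rw [← pow_succ]; congr 1; omega
    rw [prod_Ico_succ_top (by omega), aeval_succ_of_rec hDk hj]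
    push_cast
    linear_combination (∏ i ∈ Ico r (j + 1), (1 - (i : ℝ) * x)) * hFE + 2 * x * ih hjx
      - 2 * Polynomial.aeval x (D j) * hpow

theorem chainGFNumerator_mul_prod (hr : 1 ≤ r) (hDr : D r = 1)
    (hDk : ∀ j, r < j → D j = 2 * D (j - 1) -
      ∏ i ∈ Finset.Ico r j, (1 - (i : Polynomial ℤ) * Polynomial.X))
    {j : ℕ} (hj : r ≤ j + 1) {x : ℝ} (hx0 : 0 ≤ x) (hx : j * x < 1) :
    chainGFNumerator r j x * ∏ i ∈ Ico r (j + 1), (1 - (i : ℝ) * x) =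
      x ^ (j + 1 - r) * Polynomial.aeval x (D (j + 1)) := by
  rcases hj.eq_or_lt with h | h
  · simp [chainGFNumerator_of_succ_eq h.symm, ← h, hDr]
  · have hpow : x ^ (j + 1 - r) = x ^ (j - r) * x := by rw [← pow_succ]; congr 1; omega
    rw [chainGFNumerator_of_le (by omega), aeval_succ_of_rec hDk (by omega)]
    linear_combination 2 * x * chainGF_mul_prod hr hDr hDk (by omega) hx0 hx
      - 2 * Polynomial.aeval x (D j) * hpow

lemma prod_Ico_sub_eq_factorial (r k : ℕ) :
    ∏ i ∈ Ico r k, (k - i) = (k - r).factorial := by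
  rw [prod_Ico_eq_prod_range, ← Nat.descFactorial_self, Nat.descFactorial_eq_prod_range]
  exact prod_congr rfl fun t _ => by omega

lemma prod_Ico_one_sub_mul_inv (r k : ℕ) :
    ∏ i ∈ Ico r k, (1 - (i : ℝ) * (k : ℝ)⁻¹) = (k - r).factorial / (k : ℝ) ^ (k - r) := by
  have hterm : ∀ i ∈ Ico r k, 1 - (i : ℝ) * (k : ℝ)⁻¹ = ((k - i : ℕ) : ℝ) / k := by
    intro i hi
    have hk : (k : ℝ) ≠ 0 := Nat.cast_ne_zero.2 (by have := (mem_Ico.1 hi).2; omega)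
    rw [Nat.cast_sub (mem_Ico.1 hi).2.le]
    field_simp
  rw [prod_congr rfl hterm, prod_div_distrib, prod_const, Nat.card_Ico, ← Nat.cast_prod,
    prod_Ico_sub_eq_factorial]

theorem tendsto_chainCount_mul_inv_pow (hr : 1 ≤ r) (hDr : D r = 1)
    (hDk : ∀ j, r < j → D j = 2 * D (j - 1) -
      ∏ i ∈ Finset.Ico r j, (1 - (i : Polynomial ℤ) * Polynomial.X))
    {k : ℕ} (hk : r ≤ k) :
    Tendsto (fun m => (chainCount (.replicate r 1) m k : ℝ) * (k : ℝ)⁻¹ ^ m) atTop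
      (𝓝 (Polynomial.aeval (k : ℝ)⁻¹ (D k) / (k - r).factorial)) := by
  obtain ⟨j, rfl⟩ : ∃ j, k = j + 1 := ⟨k - 1, by omega⟩
  have hK : (0 : ℝ) < j + 1 := by positivity
  have hjx : (j : ℝ) * ((j : ℝ) + 1)⁻¹ < 1 := by
    rw [← div_eq_mul_inv, div_lt_one hK]
    linarith
  have hnum := chainGFNumerator_mul_prod hr hDr hDk hk (by positivity) hjx
  rw [← Nat.cast_succ, prod_Ico_one_sub_mul_inv] at hnum
  push_cast at hnum ⊢
  convert tendsto_chainCount_mul_pow (mul_inv_cancel₀ hK.ne')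
    (summable_chainCount hr j (by positivity) hjx) using 2
  rw [div_eq_iff (by positivity)]
  calc Polynomial.aeval ((j : ℝ) + 1)⁻¹ (D (j + 1))
      = ((j : ℝ) + 1)⁻¹ ^ (j + 1 - r) * Polynomial.aeval ((j : ℝ) + 1)⁻¹ (D (j + 1)) *
          ((j : ℝ) + 1) ^ (j + 1 - r) := by
        rw [mul_right_comm, ← mul_pow, inv_mul_cancel₀ hK.ne', one_pow, one_mul]
    _ = _ := by rw [← hnum]; field_simp

end

lemma ratCast_aeval (p : Polynomial ℤ) (q : ℚ) :
    ((Polynomial.aeval q p : ℚ) : ℝ) = Polynomial.aeval (q : ℝ) p := by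
  simpa using (Polynomial.aeval_algebraMap_apply ℝ q p).symm

theorem stmt14 (r : ℕ) (hr : 1 ≤ r) (α : List ℕ) (hα : α = List.replicate r 1)
    (k : ℕ) (hk : r ≤ k)
    (D : ℕ → Polynomial ℤ) (hDr : D r = 1)
    (hDk : ∀ j, r < j →
      D j = 2 * D (j - 1) -
        ∏ i ∈ Finset.Ico r j, (1 - (i : Polynomial ℤ) * Polynomial.X)) :
    Filter.Tendsto (fun n => (ank coverN α n k : ℝ) / (k : ℝ) ^ n) Filter.atTop
      (nhds (((Polynomial.aeval ((k : ℚ))⁻¹ (D k) : ℚ) : ℝ) /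
        ((Nat.factorial (k - r) : ℝ) * (k : ℝ) ^ r))) := by
  subst hα
  rw [← tendsto_add_atTop_iff_nat r]
  convert (tendsto_chainCount_mul_inv_pow hr hDr hDk hk).mul_const ((k : ℝ)⁻¹ ^ r) using 1
  · funext m
    rw [show m + r = (List.replicate r 1).sum + m by simp [add_comm], ank_sum_add]
    simp only [List.sum_replicate, smul_eq_mul, mul_one]
    rw [pow_add, div_eq_mul_inv, mul_inv, inv_pow, inv_pow]
    ring
  · rw [ratCast_aeval]
    push_cast
    congr 1
    rw [inv_pow]
    field_simp
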